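/- Let n = p·q be a product of two (not necessarily distinct) primes. A standardized DFA ⟨Z_n,{a,b}⟩ is completely reachable if and only if the difference set D₁ generates the whole group (Z_n,+). -/
import Mathlib


/-- Action of a letter: `true` is `b : q ↦ q+1`, `false` is `a`. -/
def act {n : ℕ} (a : ZMod n → ZMod n) (q : ZMod n) (c : Bool) : ZMod n :=
  if c then q + 1 else a q

/-- Action of a word on a state. -/
def wact {n : ℕ} (a : ZMod n → ZMod n) (w : List Bool) (q : ZMod n) : ZMod n :=
  w.foldl (act a) q

/-- Excluded set of a word. -/
def excl {n : ℕ} (a : ZMod n → ZMod n) (w : List Bool) : Set (ZMod n) :=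
  {q | ∀ p, wact a w p ≠ q}

/-- Duplicate set of a word. -/
def dupl {n : ℕ} (a : ZMod n → ZMod n) (w : List Bool) : Set (ZMod n) :=
  {p | ∃ q₁ q₂, q₁ ≠ q₂ ∧ wact a w q₁ = p ∧ wact a w q₂ = p}

/-- Complete reachability for a standardized binary DFA on `ZMod n`. -/
def CompletelyReachable {n : ℕ} (a : ZMod n → ZMod n) : Prop :=
  ∀ S : Set (ZMod n), S.Nonempty → ∃ w : List Bool, Set.range (wact a w) = S

/-- Standardized DFA: `a` has defect 1 with excluded state `0`, and `0·a = dupl(a)`,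
i.e. `a 0` has a second preimage `r ≠ 0`. -/
def Standardized {n : ℕ} (a : ZMod n → ZMod n) : Prop :=
  Set.range a = {(0 : ZMod n)}ᶜ ∧ ∃ r : ZMod n, r ≠ 0 ∧ a r = a 0

/-- Edge of the Rystsov graph: for some word of defect 1, `q` is the excluded state
and `p` the duplicate state. -/
def RysEdge {n : ℕ} (a : ZMod n → ZMod n) (q p : ZMod n) : Prop :=
  ∃ w : List Bool, excl a w = {q} ∧ dupl a w = {p}

/-- The difference set `D₁`. -/
def D1 {n : ℕ} (a : ZMod n → ZMod n) : Set (ZMod n) :=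
  {p | RysEdge a 0 p}

section Basics
variable {n : ℕ} (a : ZMod n → ZMod n)

lemma wact_nil (q : ZMod n) : wact a [] q = q := rfl

lemma wact_append (u v : List Bool) (q : ZMod n) :
    wact a (u ++ v) q = wact a v (wact a u q) := by
  simp [wact, List.foldl_append]

lemma wact_concat (w : List Bool) (c : Bool) (q : ZMod n) :
    wact a (w ++ [c]) q = act a (wact a w q) c := by
  simp [wact_append, wact]

lemma range_concat (w : List Bool) (c : Bool) :
    Set.range (wact a (w ++ [c])) = (fun x => act a x c) '' Set.range (wact a w) := by
  have : wact a (w ++ [c]) = (fun x => act a x c) ∘ wact a w := by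
    funext q; simp [wact_concat]
  rw [this, Set.range_comp]

lemma excl_eq_compl_range (w : List Bool) :
    excl a w = (Set.range (wact a w))ᶜ := by
  ext x
  simp only [excl, Set.mem_setOf_eq, Set.mem_compl_iff, Set.mem_range, not_exists]


lemma excl_singleton_iff (w : List Bool) (e : ZMod n) :
    excl a w = {e} ↔ Set.range (wact a w) = {e}ᶜ := by
  rw [excl_eq_compl_range]
  constructor
  · intro h; rw [← h, compl_compl]
  · intro h; rw [h, compl_compl]

end Basics

section Collision
variable {n : ℕ} [NeZero n] {a : ZMod n → ZMod n} {r : ZMod n}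
variable (hra : Set.range a = {(0:ZMod n)}ᶜ) (hr : r ≠ 0) (har : a r = a 0)

include hra hr har in
lemma collision : ∀ x y : ZMod n, a x = a y → x = y ∨ (x = 0 ∧ y = r) ∨ (x = r ∧ y = 0) := by
  have h0 : ∀ x, a x ≠ 0 := by
    intro x hx
    have : a x ∈ Set.range a := ⟨x, rfl⟩
    rw [hra] at this; exact this hx
  have himg : Finset.image a Finset.univ = Finset.univ.erase 0 := by
    ext y
    simp only [Finset.mem_image, Finset.mem_erase, Finset.mem_univ, and_true, true_and]
    constructor
    · rintro ⟨x, rfl⟩; exact h0 x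
    · intro hy
      have : y ∈ Set.range a := by rw [hra]; exact hy
      exact this
  have hcard1 : (Finset.image a Finset.univ).card = n - 1 := by
    rw [himg, Finset.card_erase_of_mem (Finset.mem_univ _), Finset.card_univ, ZMod.card]
  have himg2 : Finset.image a (Finset.univ.erase r) = Finset.image a Finset.univ := by
    apply Finset.Subset.antisymm (Finset.image_subset_image (Finset.erase_subset _ _))
    intro y hy
    simp only [Finset.mem_image, Finset.mem_univ, true_and] at hy
    obtain ⟨x, hx⟩ := hy
    rcases eq_or_ne x r with rfl | hxr
    · refine Finset.mem_image.mpr ⟨0, ?_, by rw [← har, hx]⟩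
      exact Finset.mem_erase.mpr ⟨Ne.symm hr, Finset.mem_univ _⟩
    · exact Finset.mem_image.mpr ⟨x, Finset.mem_erase.mpr ⟨hxr, Finset.mem_univ _⟩, hx⟩
  have hinj : Set.InjOn a (Finset.univ.erase r : Finset (ZMod n)) := by
    apply Finset.injOn_of_card_image_eq
    rw [himg2, hcard1, Finset.card_erase_of_mem (Finset.mem_univ _), Finset.card_univ, ZMod.card]
  have hmem : ∀ x : ZMod n, x ≠ r → (x ∈ (Finset.univ.erase r : Finset (ZMod n)) : Prop) := by
    intro x hx; exact Finset.mem_coe.mpr (Finset.mem_erase.mpr ⟨hx, Finset.mem_univ _⟩)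
  intro x y hxy
  by_cases hxr : x = r
  · by_cases hyr : y = r
    · exact Or.inl (hxr.trans hyr.symm)
    · by_cases hy0 : y = 0
      · exact Or.inr (Or.inr ⟨hxr, hy0⟩)
      · exact absurd (hinj (hmem y hyr) (hmem 0 (Ne.symm hr)) (by rw [← hxy, hxr, har])) hy0
  · by_cases hyr : y = r
    · by_cases hx0 : x = 0
      · exact Or.inr (Or.inl ⟨hx0, hyr⟩)
      · exact absurd (hinj (hmem x hxr) (hmem 0 (Ne.symm hr)) (by rw [hxy, hyr, har])) hx0
    · exact Or.inl (hinj (hmem x hxr) (hmem y hyr) hxy)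

end Collision

section UniqueDup
variable {n : ℕ} [NeZero n]

lemma unique_dup (f : ZMod n → ZMod n) (e : ZMod n) (hf : Set.range f = {e}ᶜ) :
    ∃ d, {p : ZMod n | ∃ q₁ q₂, q₁ ≠ q₂ ∧ f q₁ = p ∧ f q₂ = p} = {d} := by
  have hnotsurj : ¬ Function.Surjective f := by
    intro h
    have : e ∈ Set.range f := h e
    rw [hf] at this; exact this rfl
  have hnotinj : ¬ Function.Injective f := by
    intro h; exact hnotsurj ((Finite.injective_iff_surjective).mp h)
  obtain ⟨x1, x2, hfx, hx⟩ := Function.not_injective_iff.mp hnotinj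
  haveI : Nontrivial (ZMod n) := ⟨x1, x2, hx⟩
  have hn2 : 2 ≤ n := by
    have := Fintype.one_lt_card (α := ZMod n)
    rwa [ZMod.card] at this
  refine ⟨f x1, ?_⟩
  ext p
  simp only [Set.mem_setOf_eq, Set.mem_singleton_iff]
  constructor
  · rintro ⟨q1, q2, hq, hq1, hq2⟩
    by_contra hpd
    have hq1x1 : f q1 ≠ f x1 := by rw [hq1]; exact hpd
    have hsub : Set.range f ⊆ f '' ({x1, q1}ᶜ) := by
      rintro z ⟨x, rfl⟩
      by_cases h1 : x = x1
      · refine ⟨x2, ?_, by rw [← hfx, h1]⟩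
        simp only [Set.mem_compl_iff, Set.mem_insert_iff, Set.mem_singleton_iff]
        push_neg
        exact ⟨fun h => hx h.symm, fun h => hq1x1 (by rw [← h, ← hfx])⟩
      · by_cases h2 : x = q1
        · refine ⟨q2, ?_, by rw [hq2, h2, hq1]⟩
          simp only [Set.mem_compl_iff, Set.mem_insert_iff, Set.mem_singleton_iff]
          push_neg
          exact ⟨fun h => hq1x1 (by rw [hq1, ← hq2, h]), fun h => hq h.symm⟩
        · exact ⟨x, by simp [h1, h2], rfl⟩
    have hx1q1 : x1 ≠ q1 := fun h => hq1x1 (by rw [h])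
    have hc1 : (Set.range f).ncard = n - 1 := by
      rw [hf, Set.compl_eq_univ_diff, Set.ncard_diff (Set.subset_univ _),
        Set.ncard_univ, Nat.card_zmod, Set.ncard_singleton]
    have hc2 : (({x1, q1}ᶜ : Set (ZMod n))).ncard = n - 2 := by
      rw [Set.compl_eq_univ_diff, Set.ncard_diff (Set.subset_univ _),
        Set.ncard_univ, Nat.card_zmod, Set.ncard_pair hx1q1]
    have h1 : (Set.range f).ncard ≤ (f '' ({x1, q1}ᶜ)).ncard :=
      Set.ncard_le_ncard hsub (Set.toFinite _)
    have h2 : (f '' ({x1, q1}ᶜ)).ncard ≤ (({x1, q1}ᶜ : Set (ZMod n))).ncard :=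
      Set.ncard_image_le (Set.toFinite _)
    rw [hc1] at h1; rw [hc2] at h2
    omega
  · rintro rfl
    exact ⟨x1, x2, hx, rfl, hfx.symm⟩

end UniqueDup

section Shift
variable {n : ℕ} (a : ZMod n → ZMod n)

lemma wact_cons (c : Bool) (w : List Bool) (q : ZMod n) :
    wact a (c :: w) q = wact a w (act a q c) := rfl

lemma wact_replicate_true (k : ℕ) (q : ZMod n) :
    wact a (List.replicate k true) q = q + (k : ZMod n) := by
  induction k generalizing q with
  | zero => simp [wact_nil]
  | succ m ih =>
      rw [List.replicate_succ, wact_cons, ih]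
      simp only [act, if_true]
      push_cast
      ring

lemma wact_shift (w : List Bool) (k : ℕ) (q : ZMod n) :
    wact a (w ++ List.replicate k true) q = wact a w q + (k : ZMod n) := by
  rw [wact_append, wact_replicate_true]

lemma range_shift (w : List Bool) (k : ℕ) :
    Set.range (wact a (w ++ List.replicate k true))
      = (· + (k : ZMod n)) '' Set.range (wact a w) := by
  have : wact a (w ++ List.replicate k true) = (· + (k : ZMod n)) ∘ wact a w := by
    funext q; simp [wact_shift]
  rw [this, Set.range_comp]

lemma excl_shift (w : List Bool) (k : ℕ) (e : ZMod n) (hw : excl a w = {e}) :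
    excl a (w ++ List.replicate k true) = {e + (k : ZMod n)} := by
  rw [excl_singleton_iff] at hw ⊢
  have hb : Function.Bijective (fun x : ZMod n => x + (k : ZMod n)) :=
    ⟨add_left_injective _, fun y => ⟨y - (k : ZMod n), sub_add_cancel y _⟩⟩
  rw [range_shift, hw, Set.image_compl_eq hb]
  congr 1
  simp

lemma dupl_shift (w : List Bool) (k : ℕ) (d : ZMod n) (hw : dupl a w = {d}) :
    dupl a (w ++ List.replicate k true) = {d + (k : ZMod n)} := by
  ext x
  simp only [dupl, Set.mem_setOf_eq, Set.mem_singleton_iff, wact_shift]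
  have hd := Set.ext_iff.mp hw
  simp only [dupl, Set.mem_setOf_eq, Set.mem_singleton_iff] at hd
  constructor
  · rintro ⟨q1, q2, hq, h1, h2⟩
    have : wact a w q1 = d := by
      have := (hd (wact a w q1)).mp ⟨q1, q2, hq, rfl, by
        have : wact a w q2 + (k:ZMod n) = wact a w q1 + (k:ZMod n) := h2.trans h1.symm
        exact add_right_cancel this⟩
      exact this
    rw [← h1, this]
  · rintro rfl
    obtain ⟨q1, q2, hq, h1, h2⟩ := (hd d).mpr rfl
    exact ⟨q1, q2, hq, by rw [h1], by rw [h2]⟩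

end Shift

section Steps
variable {n : ℕ} [NeZero n] {a : ZMod n → ZMod n} {r : ZMod n}
variable (hra : Set.range a = {(0:ZMod n)}ᶜ) (hr : r ≠ 0) (har : a r = a 0)

lemma wact_single (q : ZMod n) : wact a [false] q = a q := rfl

lemma range_single : Set.range (wact a [false]) = Set.range a := rfl

include hra in
lemma excl_a_nil : excl a [false] = ({0} : Set (ZMod n)) := by
  rw [excl_singleton_iff, range_single, hra]

include hra hr har in
lemma dupl_a_nil : dupl a [false] = ({a 0} : Set (ZMod n)) := by
  ext p
  simp only [dupl, Set.mem_setOf_eq, Set.mem_singleton_iff, wact_single]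
  constructor
  · rintro ⟨q1, q2, hq, h1, h2⟩
    rcases collision hra hr har q1 q2 (h1.trans h2.symm) with h | ⟨h1', h2'⟩ | ⟨h1', h2'⟩
    · exact absurd h hq
    · rw [← h1, h1']
    · rw [← h1, h1', har]
  · rintro rfl
    exact ⟨r, 0, hr, har, rfl⟩

include hra hr har in
lemma step_a (w : List Bool) (e d : ZMod n) (he : e = 0 ∨ e = r)
    (hexcl : excl a w = {e}) (hdupl : dupl a w = {d}) :
    excl a (w ++ [false]) = {0} ∧ dupl a (w ++ [false]) = {a d} := by
  rw [excl_singleton_iff] at hexcl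
  have hact : (fun x : ZMod n => act a x false) = a := by funext x; rfl
  constructor
  · rw [excl_singleton_iff, range_concat, hexcl, hact]
    apply Set.Subset.antisymm
    · intro y hy
      obtain ⟨x, -, rfl⟩ := hy
      have : a x ∈ Set.range a := ⟨x, rfl⟩
      rwa [hra] at this
    · intro y hy
      have : y ∈ Set.range a := by rw [hra]; exact hy
      obtain ⟨x, rfl⟩ := this
      by_cases hx : x = e
      · rcases he with rfl | rfl
        · exact ⟨r, by simpa [hx] using hr, by rw [hx, ← har]⟩
        · exact ⟨0, by simp [hx, Ne.symm hr], by rw [hx, har]⟩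
      · exact ⟨x, hx, rfl⟩
  · ext p
    simp only [dupl, Set.mem_setOf_eq, Set.mem_singleton_iff, wact_concat]
    have hdm := Set.ext_iff.mp hdupl
    simp only [dupl, Set.mem_setOf_eq, Set.mem_singleton_iff] at hdm
    constructor
    · rintro ⟨q1, q2, hq, h1, h2⟩
      simp only [act, if_neg Bool.false_ne_true, Bool.false_eq_true, if_false] at h1 h2
      set v1 := wact a w q1 with hv1
      set v2 := wact a w q2 with hv2
      have hv1r : v1 ∈ Set.range (wact a w) := ⟨q1, rfl⟩
      have hv2r : v2 ∈ Set.range (wact a w) := ⟨q2, rfl⟩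
      rw [hexcl] at hv1r hv2r
      by_cases hv : v1 = v2
      · have : v1 = d := (hdm v1).mp ⟨q1, q2, hq, rfl, hv.symm⟩
        rw [← h1, this]
      · exfalso
        rcases collision hra hr har v1 v2 (h1.trans h2.symm) with h | ⟨ha1, ha2⟩ | ⟨ha1, ha2⟩
        · exact hv h
        · rcases he with rfl | rfl
          · exact hv1r ha1
          · exact hv2r ha2
        · rcases he with rfl | rfl
          · exact hv2r ha2
          · exact hv1r ha1
    · rintro rfl
      obtain ⟨q1, q2, hq, h1, h2⟩ := (hdm d).mpr rfl
      refine ⟨q1, q2, hq, ?_, ?_⟩ <;>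
        simp only [act, Bool.false_eq_true, if_false, h1, h2]

lemma D1_shift (d : ZMod n) (hd : d ∈ D1 a) (e : ZMod n) :
    ∃ w, excl a w = {e} ∧ dupl a w = {d + e} := by
  obtain ⟨w, hw1, hw2⟩ := hd
  refine ⟨w ++ List.replicate e.val true, ?_, ?_⟩
  · rw [excl_shift a w e.val 0 hw1, ZMod.natCast_val, ZMod.cast_id, zero_add]
  · rw [dupl_shift a w e.val d hw2, ZMod.natCast_val, ZMod.cast_id]

include hra hr har in
lemma D1_a0 : a 0 ∈ D1 a :=
  ⟨[false], excl_a_nil hra, dupl_a_nil hra hr har⟩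

include hra hr har in
lemma D1_a (d : ZMod n) (hd : d ∈ D1 a) : a d ∈ D1 a := by
  obtain ⟨w, hw1, hw2⟩ := hd
  obtain ⟨h1, h2⟩ := step_a hra hr har w 0 d (Or.inl rfl) hw1 hw2
  exact ⟨w ++ [false], h1, h2⟩

include hra hr har in
lemma D1_a_add_r (d : ZMod n) (hd : d ∈ D1 a) : a (d + r) ∈ D1 a := by
  obtain ⟨w, hw1, hw2⟩ := D1_shift d hd r
  obtain ⟨h1, h2⟩ := step_a hra hr har w r (d + r) (Or.inr rfl) hw1 hw2
  exact ⟨w ++ [false], h1, h2⟩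

lemma D1_ne_zero (d : ZMod n) (hd : d ∈ D1 a) : d ≠ 0 := by
  obtain ⟨w, hw1, hw2⟩ := hd
  rw [excl_singleton_iff] at hw1
  have : d ∈ Set.range (wact a w) := by
    have : d ∈ dupl a w := by rw [hw2]; rfl
    obtain ⟨q1, -, -, h1, -⟩ := this
    exact ⟨q1, h1⟩
  rw [hw1] at this
  simpa using this

end Steps

section LemE
variable {n : ℕ} [NeZero n] {a : ZMod n → ZMod n} {r : ZMod n}
variable (hra : Set.range a = {(0:ZMod n)}ᶜ) (hr : r ≠ 0) (har : a r = a 0)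

lemma ncard_compl_singleton (x : ZMod n) : ({x}ᶜ : Set (ZMod n)).ncard = n - 1 := by
  rw [Set.compl_eq_univ_diff, Set.ncard_diff (Set.subset_univ _),
    Set.ncard_univ, Nat.card_zmod, Set.ncard_singleton]

include hra hr har in
lemma injOn_no_zero (R : Set (ZMod n)) (h : (0:ZMod n) ∉ R) : Set.InjOn a R := by
  intro x hx y hy hxy
  rcases collision hra hr har x y hxy with h' | ⟨h1, h2⟩ | ⟨h1, h2⟩
  · exact h'
  · exact absurd (h1 ▸ hx) h
  · exact absurd (h2 ▸ hy) h

include hra hr har in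
lemma injOn_no_r (R : Set (ZMod n)) (h : r ∉ R) : Set.InjOn a R := by
  intro x hx y hy hxy
  rcases collision hra hr har x y hxy with h' | ⟨h1, h2⟩ | ⟨h1, h2⟩
  · exact h'
  · exact absurd (h2 ▸ hy) h
  · exact absurd (h1 ▸ hx) h

lemma range_concat_true (w : List Bool) :
    Set.range (wact a (w ++ [true])) = (· + 1) '' Set.range (wact a w) := by
  rw [range_concat]; rfl

lemma range_concat_false (w : List Bool) :
    Set.range (wact a (w ++ [false])) = a '' Set.range (wact a w) := by
  rw [range_concat]; rfl

lemma dupl_concat_true (w : List Bool) :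
    dupl a (w ++ [true]) = (· + 1) '' dupl a w := by
  ext x
  simp only [dupl, Set.mem_setOf_eq, Set.mem_image, wact_concat, act, if_true]
  constructor
  · rintro ⟨q1, q2, hq, h1, h2⟩
    exact ⟨wact a w q1, ⟨q1, q2, hq, rfl, by
      have := h2.trans h1.symm; exact (add_right_cancel this)⟩, h1⟩
  · rintro ⟨y, ⟨q1, q2, hq, h1, h2⟩, hy⟩
    exact ⟨q1, q2, hq, by rw [h1, hy], by rw [h2, hy]⟩

include hra hr har in
lemma lemE_aux (w : List Bool) : ∀ e d : ZMod n, excl a w = {e} → dupl a w = {d} →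
    ∃ x : ZMod n, (x ∈ insert (0:ZMod n) (D1 a) ∨ x - r ∈ insert (0:ZMod n) (D1 a))
      ∧ a x = d - e := by
  induction w using List.reverseRecOn with
  | nil =>
      intro e d h1 _
      exfalso
      rw [excl_singleton_iff] at h1
      have : e ∈ Set.range (wact a []) := ⟨e, rfl⟩
      rw [h1] at this
      exact this rfl
  | append_singleton w c ih =>
      intro e d h1 h2
      cases c with
      | true =>
          have hb : Function.Injective (fun x : ZMod n => x + 1) := add_left_injective 1
          rw [excl_singleton_iff, range_concat_true] at h1
          rw [dupl_concat_true] at h2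
          have h1' : excl a w = {e - 1} := by
            rw [excl_singleton_iff]
            have := congrArg (Set.preimage (fun x : ZMod n => x + 1)) h1
            rw [Set.preimage_image_eq _ hb] at this
            rw [this]
            ext x
            simp only [Set.mem_preimage, Set.mem_compl_iff, Set.mem_singleton_iff]
            constructor
            · intro h h'; exact h (by rw [h']; ring)
            · intro h h'; exact h (by rw [← h']; ring)
          have h2' : dupl a w = {d - 1} := by
            have := congrArg (Set.preimage (fun x : ZMod n => x + 1)) h2
            rw [Set.preimage_image_eq _ hb] at this
            rw [this]
            ext x
            simp only [Set.mem_preimage, Set.mem_singleton_iff]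
            constructor
            · intro h; rw [← h]; ring
            · intro h; rw [h]; ring
          obtain ⟨x, hx, hax⟩ := ih (e - 1) (d - 1) h1' h2'
          exact ⟨x, hx, by rw [hax]; ring⟩
      | false =>
          rw [excl_singleton_iff, range_concat_false] at h1
          set R := Set.range (wact a w) with hR
          have hnot0 : (0:ZMod n) ∉ a '' R := by
            rintro ⟨x, -, hx⟩
            have : a x ∈ Set.range a := ⟨x, rfl⟩
            rw [hra] at this; exact this hx
          have he0 : e = 0 := by
            by_contra he
            exact hnot0 (h1.symm ▸ (fun h' => he (by simpa using h'.symm) : (0:ZMod n) ∈ ({e}ᶜ : Set (ZMod n))))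
          subst he0
          have hd : d ∈ dupl a (w ++ [false]) := by rw [h2]; rfl
          have hnpos : 1 ≤ n := Nat.one_le_iff_ne_zero.mpr (NeZero.ne n)
          by_cases h0R : (0:ZMod n) ∈ R
          · by_cases hrR : r ∈ R
            · -- R = univ, wact a w bijective
              have himg : a '' R = a '' (R \ {r}) := by
                apply Set.Subset.antisymm
                · rintro z ⟨x, hx, rfl⟩
                  by_cases hxr : x = r
                  · exact ⟨0, ⟨h0R, by simp [Ne.symm hr]⟩, by rw [← har, hxr]⟩
                  · exact ⟨x, ⟨hx, hxr⟩, rfl⟩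
                · exact Set.image_mono Set.diff_subset
              have hinj : Set.InjOn a (R \ {r}) :=
                injOn_no_r hra hr har _ (fun h => h.2 rfl)
              have hc1 : (a '' R).ncard = n - 1 := by rw [h1, ncard_compl_singleton]
              have hc2 : (a '' R).ncard = R.ncard - 1 := by
                rw [himg, Set.ncard_image_of_injOn hinj,
                  Set.ncard_diff_singleton_of_mem hrR]
              have hle : R.ncard ≤ n := by
                have := Set.ncard_le_ncard (Set.subset_univ R) (Set.toFinite _)
                rwa [Set.ncard_univ, Nat.card_zmod] at this
              have hge : 1 ≤ R.ncard := (Set.ncard_pos (Set.toFinite _)).mpr ⟨0, h0R⟩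

              have hcn : R.ncard = n := by omega
              have hRuniv : R = Set.univ := by
                apply Set.eq_of_subset_of_ncard_le (Set.subset_univ R)
                rw [Set.ncard_univ, Nat.card_zmod, hcn]
              have hsurj : Function.Surjective (wact a w) := Set.range_eq_univ.mp hRuniv
              have hwinj : Function.Injective (wact a w) :=
                (Finite.injective_iff_surjective).mpr hsurj
              obtain ⟨q1, q2, hq, hh1, hh2⟩ := hd
              rw [wact_concat] at hh1 hh2
              simp only [act, Bool.false_eq_true, if_false] at hh1 hh2
              have hne : wact a w q1 ≠ wact a w q2 := fun h => hq (hwinj h)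
              have hda0 : d = a 0 := by
                rcases collision hra hr har _ _ (hh1.trans hh2.symm) with h | ⟨ha1, ha2⟩ | ⟨ha1, ha2⟩
                · exact absurd h hne
                · rw [← hh1, ha1]
                · rw [← hh1, ha1, har]
              exact ⟨0, Or.inl (Set.mem_insert _ _), by rw [hda0, sub_zero]⟩
            · -- r ∉ R : R = {r}ᶜ
              have hinj : Set.InjOn a R := injOn_no_r hra hr har R hrR
              have hc1 : R.ncard = n - 1 := by
                rw [← Set.ncard_image_of_injOn hinj, h1, ncard_compl_singleton]
              have hReq : R = ({r}ᶜ : Set (ZMod n)) := by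
                apply Set.eq_of_subset_of_ncard_le
                · intro x hx
                  exact fun h => hrR (h ▸ hx)
                · rw [hc1, ncard_compl_singleton]
                · exact Set.toFinite _
              obtain ⟨d', hd'⟩ := unique_dup (wact a w) r hReq
              have hdw : dupl a w = {d'} := hd'
              have hexw : excl a w = {r} := (excl_singleton_iff a w r).mpr hReq
              obtain ⟨-, hstep⟩ := step_a hra hr har w r d' (Or.inr rfl) hexw hdw
              have hdad' : d = a d' := by
                rw [h2] at hstep
                exact (Set.singleton_eq_singleton_iff.mp hstep)
              -- show d' - r ∈ D1
              have hk : ((n - r.val : ℕ) : ZMod n) = -r := by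
                rw [Nat.cast_sub (le_of_lt (ZMod.val_lt r)), ZMod.natCast_self,
                  ZMod.natCast_val, ZMod.cast_id, zero_sub]
              have hex2 : excl a (w ++ List.replicate (n - r.val) true) = {(0:ZMod n)} := by
                rw [excl_shift a w _ r hexw, hk, add_neg_cancel]
              have hdu2 : dupl a (w ++ List.replicate (n - r.val) true) = {d' - r} := by
                rw [dupl_shift a w _ d' hdw, hk, ← sub_eq_add_neg]
              have hmem : d' - r ∈ D1 a := ⟨_, hex2, hdu2⟩
              exact ⟨d', Or.inr (Set.mem_insert_of_mem _ hmem), by rw [← hdad', sub_zero]⟩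
          · -- 0 ∉ R : R = {0}ᶜ
            have hinj : Set.InjOn a R := injOn_no_zero hra hr har R h0R
            have hc1 : R.ncard = n - 1 := by
              rw [← Set.ncard_image_of_injOn hinj, h1, ncard_compl_singleton]
            have hReq : R = ({(0:ZMod n)}ᶜ : Set (ZMod n)) := by
              apply Set.eq_of_subset_of_ncard_le
              · intro x hx
                exact fun h => h0R (h ▸ hx)
              · rw [hc1, ncard_compl_singleton]
              · exact Set.toFinite _
            obtain ⟨d', hd'⟩ := unique_dup (wact a w) 0 hReq
            have hdw : dupl a w = {d'} := hd'
            have hexw : excl a w = {(0:ZMod n)} := (excl_singleton_iff a w 0).mpr hReq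
            obtain ⟨-, hstep⟩ := step_a hra hr har w 0 d' (Or.inl rfl) hexw hdw
            have hdad' : d = a d' := by
              rw [h2] at hstep
              exact (Set.singleton_eq_singleton_iff.mp hstep)
            have hmem : d' ∈ D1 a := ⟨w, hexw, hdw⟩
            exact ⟨d', Or.inl (Set.mem_insert_of_mem _ hmem), by rw [← hdad', sub_zero]⟩

include hra hr har in
lemma lemE (d : ZMod n) (hd : d ∈ D1 a) :
    ∃ x : ZMod n, (x ∈ insert (0:ZMod n) (D1 a) ∨ x - r ∈ insert (0:ZMod n) (D1 a))
      ∧ a x = d := by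
  obtain ⟨w, hw1, hw2⟩ := hd
  obtain ⟨x, hx, hax⟩ := lemE_aux hra hr har w 0 d hw1 hw2
  exact ⟨x, hx, by rwa [sub_zero] at hax⟩

end LemE

section Count
variable {n : ℕ} [NeZero n] {a : ZMod n → ZMod n} {r : ZMod n}
variable (hra : Set.range a = {(0:ZMod n)}ᶜ) (hr : r ≠ 0) (har : a r = a 0)

include hra hr har in
lemma A_eq_U : insert (0:ZMod n) (D1 a)
    = insert (0:ZMod n) (D1 a) ∪ (fun y => y + r) '' insert (0:ZMod n) (D1 a) := by
  set A := insert (0:ZMod n) (D1 a) with hA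
  set U := A ∪ (fun y => y + r) '' A with hU
  have hAU : A = insert (0:ZMod n) (a '' U) := by
    apply Set.Subset.antisymm
    · intro x hx
      rcases hx with rfl | hx
      · exact Set.mem_insert _ _
      · obtain ⟨y, hy, hay⟩ := lemE hra hr har x hx
        refine Set.mem_insert_of_mem _ ⟨y, ?_, hay⟩
        rcases hy with hy | hy
        · exact Or.inl hy
        · exact Or.inr ⟨y - r, hy, by simp⟩
    · intro x hx
      rcases hx with rfl | ⟨y, hy, rfl⟩
      · exact Set.mem_insert _ _
      · rcases hy with (rfl | hy) | ⟨t, ht, rfl⟩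
        · exact Set.mem_insert_of_mem _ (D1_a0 hra hr har)
        · exact Set.mem_insert_of_mem _ (D1_a hra hr har y hy)
        · rcases ht with rfl | ht
          · have : (fun y => y + r) 0 = r := by simp
            rw [this, har]
            exact Set.mem_insert_of_mem _ (D1_a0 hra hr har)
          · exact Set.mem_insert_of_mem _ (D1_a_add_r hra hr har t ht)
  have h0U : (0:ZMod n) ∈ U := Or.inl (Set.mem_insert _ _)
  have hrU : r ∈ U := Or.inr ⟨0, Set.mem_insert _ _, by simp⟩
  have hnot0 : (0:ZMod n) ∉ a '' U := by
    rintro ⟨x, -, hx⟩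
    have : a x ∈ Set.range a := ⟨x, rfl⟩
    rw [hra] at this; exact this hx
  have himg : a '' U = a '' (U \ {r}) := by
    apply Set.Subset.antisymm
    · rintro z ⟨x, hx, rfl⟩
      by_cases hxr : x = r
      · exact ⟨0, ⟨h0U, by simp [Ne.symm hr]⟩, by rw [← har, hxr]⟩
      · exact ⟨x, ⟨hx, hxr⟩, rfl⟩
    · exact Set.image_mono Set.diff_subset
  have hinj : Set.InjOn a (U \ {r}) := injOn_no_r hra hr har _ (fun h => h.2 rfl)
  have hcU : (a '' U).ncard = U.ncard - 1 := by
    rw [himg, Set.ncard_image_of_injOn hinj, Set.ncard_diff_singleton_of_mem hrU]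
  have hcA : A.ncard = (a '' U).ncard + 1 := by
    rw [hAU, Set.ncard_insert_of_notMem hnot0 (Set.toFinite _)]
  have hU1 : 1 ≤ U.ncard := (Set.ncard_pos (Set.toFinite _)).mpr ⟨r, hrU⟩
  have hsub : A ⊆ U := Set.subset_union_left
  have hle : A.ncard ≤ U.ncard := Set.ncard_le_ncard hsub (Set.toFinite _)
  have : U.ncard ≤ A.ncard := by omega
  exact (Set.eq_of_subset_of_ncard_le hsub this (Set.toFinite _)) ▸ rfl

include hra hr har in
lemma A_add_r (x : ZMod n) (hx : x ∈ insert (0:ZMod n) (D1 a)) :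
    x + r ∈ insert (0:ZMod n) (D1 a) := by
  have := A_eq_U hra hr har
  rw [this]
  exact Or.inr ⟨x, hx, rfl⟩

include hra hr har in
lemma r_mem_A : r ∈ insert (0:ZMod n) (D1 a) := by
  have := A_add_r hra hr har 0 (Set.mem_insert _ _)
  rwa [zero_add] at this

end Count

section Unreach
variable {n : ℕ} [NeZero n] {a : ZMod n → ZMod n} {r : ZMod n}
variable (hra : Set.range a = {(0:ZMod n)}ᶜ) (hr : r ≠ 0) (har : a r = a 0)

include hra hr har in
lemma unreach (K : AddSubgroup (ZMod n)) (hrK : r ∈ K) (haK : ∀ x ∈ K, a x ∈ K) :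
    ∀ (w : List Bool) (c : ZMod n),
      Set.range (wact a w) ≠ {x : ZMod n | x - c ∈ K}ᶜ := by
  have hnot0 : ∀ x, a x ≠ 0 := by
    intro x hx
    have : a x ∈ Set.range a := ⟨x, rfl⟩
    rw [hra] at this; exact this hx
  have h0K : (0:ZMod n) ∈ K := zero_mem K
  have himgK : a '' (K : Set (ZMod n)) = (K : Set (ZMod n)) \ {0} := by
    have hsub : a '' (K : Set (ZMod n)) ⊆ (K : Set (ZMod n)) \ {0} := by
      rintro z ⟨x, hx, rfl⟩
      exact ⟨haK x hx, hnot0 x⟩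
    have himg : a '' (K : Set (ZMod n)) = a '' ((K : Set (ZMod n)) \ {r}) := by
      apply Set.Subset.antisymm
      · rintro z ⟨x, hx, rfl⟩
        by_cases hxr : x = r
        · exact ⟨0, ⟨h0K, by simp [Ne.symm hr]⟩, by rw [← har, hxr]⟩
        · exact ⟨x, ⟨hx, hxr⟩, rfl⟩
      · exact Set.image_mono Set.diff_subset
    have hinj : Set.InjOn a ((K : Set (ZMod n)) \ {r}) :=
      injOn_no_r hra hr har _ (fun h => h.2 rfl)
    have hc1 : (a '' (K : Set (ZMod n))).ncard = (K : Set (ZMod n)).ncard - 1 := by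
      rw [himg, Set.ncard_image_of_injOn hinj, Set.ncard_diff_singleton_of_mem hrK]
    have hc2 : ((K : Set (ZMod n)) \ {0}).ncard = (K : Set (ZMod n)).ncard - 1 := by
      rw [Set.ncard_diff_singleton_of_mem h0K]
    exact (Set.eq_of_subset_of_ncard_le hsub (by omega) (Set.toFinite _))
  have hKcomp : a '' ((K : Set (ZMod n))ᶜ) ⊆ (K : Set (ZMod n))ᶜ := by
    rintro z ⟨x, hx, rfl⟩
    intro haxK
    have : a x ∈ (K : Set (ZMod n)) \ {0} := ⟨haxK, hnot0 x⟩
    rw [← himgK] at this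
    obtain ⟨y, hy, hay⟩ := this
    rcases collision hra hr har y x hay with h | ⟨h1, h2⟩ | ⟨h1, h2⟩
    · exact hx (h ▸ hy)
    · exact hx (h2 ▸ hrK)
    · exact hx (h2 ▸ h0K)
  have hinjKc : Set.InjOn a ((K : Set (ZMod n))ᶜ) :=
    injOn_no_zero hra hr har _ (fun h => h h0K)
  have himgKc : a '' ((K : Set (ZMod n))ᶜ) = (K : Set (ZMod n))ᶜ := by
    apply Set.eq_of_subset_of_ncard_le hKcomp _ (Set.toFinite _)
    rw [Set.ncard_image_of_injOn hinjKc]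
  intro w
  induction w using List.reverseRecOn with
  | nil =>
      intro c h
      have : c ∈ Set.range (wact a []) := ⟨c, rfl⟩
      rw [h] at this
      exact this (by simp [h0K])
  | append_singleton w cl ih =>
      intro c h
      cases cl with
      | true =>
          rw [range_concat_true] at h
          have hb : Function.Injective (fun x : ZMod n => x + 1) := add_left_injective 1
          have hR : Set.range (wact a w) = {x : ZMod n | x - (c - 1) ∈ K}ᶜ := by
            have := congrArg (Set.preimage (fun x : ZMod n => x + 1)) h
            rw [Set.preimage_image_eq _ hb] at this
            rw [this, Set.preimage_compl]
            congr 1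
            ext x
            simp only [Set.mem_preimage, Set.mem_setOf_eq]
            constructor
            · intro hx
              have : x + 1 - c = x - (c - 1) := by ring
              rwa [this] at hx
            · intro hx
              have : x + 1 - c = x - (c - 1) := by ring
              rwa [this]
          exact ih (c - 1) hR
      | false =>
          rw [range_concat_false] at h
          by_cases hcK : c ∈ K
          · have hTc : ({x : ZMod n | x - c ∈ K}ᶜ : Set (ZMod n)) = (K : Set (ZMod n))ᶜ := by
              ext x
              simp only [Set.mem_compl_iff, Set.mem_setOf_eq, SetLike.mem_coe]
              constructor
              · intro hx hxK; exact hx (sub_mem hxK hcK)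
              · intro hx hxc
                exact hx (by simpa using add_mem hxc hcK)
            rw [hTc] at h
            set R := Set.range (wact a w) with hRdef
            have hRsub : R ⊆ (K : Set (ZMod n))ᶜ := by
              intro x hx
              intro hxK
              have : a x ∈ a '' R := ⟨x, hx, rfl⟩
              rw [h] at this
              exact this (haK x hxK)
            have hRe : R = (K : Set (ZMod n))ᶜ := by
              apply Set.Subset.antisymm hRsub
              intro y hy
              have : a y ∈ (K : Set (ZMod n))ᶜ := hKcomp ⟨y, hy, rfl⟩
              rw [← h] at this
              obtain ⟨x, hxR, hax⟩ := this
              have : x = y := hinjKc (hRsub hxR) hy hax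
              exact this ▸ hxR
            apply ih 0
            rw [hRe]
            congr 1
            ext x
            simp [sub_zero]
          · have h0T : (0:ZMod n) ∈ ({x : ZMod n | x - c ∈ K}ᶜ : Set (ZMod n)) := by
              simp only [Set.mem_compl_iff, Set.mem_setOf_eq]
              intro hc
              rw [zero_sub] at hc
              exact hcK (by simpa using neg_mem hc)
            rw [← h] at h0T
            obtain ⟨x, -, hx⟩ := h0T
            exact hnot0 x hx

end Unreach

section Suff
variable {n : ℕ} [NeZero n] {a : ZMod n → ZMod n}

lemma sufficiency (hcl : AddSubgroup.closure (D1 a) = ⊤) : CompletelyReachable a := by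
  have hmain : ∀ k : ℕ, ∀ S : Set (ZMod n), S.Nonempty → Sᶜ.ncard = k →
      ∃ w : List Bool, Set.range (wact a w) = S := by
    intro k
    induction k using Nat.strong_induction_on with
    | _ k ih =>
      intro S hS hk
      by_cases hU : S = Set.univ
      · refine ⟨[], ?_⟩
        rw [hU]
        exact Set.eq_univ_iff_forall.mpr fun x => ⟨x, rfl⟩
      · have hcompl : Sᶜ.Nonempty := Set.nonempty_compl.mpr hU
        have hclaim : ∃ d ∈ D1 a, ∃ s ∈ S, s - d ∉ S := by
          by_contra hno
          push_neg at hno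
          set C : Set (ZMod n) := {x | ∀ s ∈ S, s - x ∈ S} with hC
          have hzero : (0:ZMod n) ∈ C := by intro s hs; simpa using hs
          have hadd : ∀ x ∈ C, ∀ y ∈ C, x + y ∈ C := by
            intro x hx y hy s hs
            have h1 : s - x ∈ S := hx s hs
            have h2 : s - x - y ∈ S := hy _ h1
            rwa [sub_sub] at h2
          have hnsmul : ∀ (k : ℕ), ∀ x ∈ C, k • x ∈ C := by
            intro k
            induction k with
            | zero => intro x _; simpa using hzero
            | succ m ihm =>
                intro x hx
                have := hadd _ (ihm x hx) _ hx
                rwa [← succ_nsmul] at this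
          have hneg : ∀ x ∈ C, -x ∈ C := by
            intro x hx
            have h1 : (n - 1) • x ∈ C := hnsmul _ x hx
            have h2 : ((n - 1 : ℕ)) • x = -x := by
              rw [nsmul_eq_mul, Nat.cast_sub (Nat.one_le_iff_ne_zero.mpr (NeZero.ne n)),
                ZMod.natCast_self, Nat.cast_one, zero_sub, neg_one_mul]
            rwa [h2] at h1
          let G : AddSubgroup (ZMod n) :=
            { carrier := C
              zero_mem' := hzero
              add_mem' := fun hx hy => hadd _ hx _ hy
              neg_mem' := fun hx => hneg _ hx }
          have hD1G : D1 a ⊆ (G : Set (ZMod n)) := fun d hd s hs => hno d hd s hs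
          have htop : (⊤ : AddSubgroup (ZMod n)) ≤ G := by
            rw [← hcl]
            exact (AddSubgroup.closure_le G).mpr hD1G
          obtain ⟨s, hs⟩ := hS
          obtain ⟨t, ht⟩ := hcompl
          have : s - (s - t) ∈ S := htop (AddSubgroup.mem_top (s - t)) s hs
          rw [sub_sub_cancel] at this
          exact ht this
        obtain ⟨d, hd, s, hsS, hes⟩ := hclaim
        obtain ⟨u, hu1, hu2⟩ := D1_shift d hd (s - d)
        have hds : d + (s - d) = s := by ring
        rw [hds] at hu2
        rw [excl_singleton_iff] at hu1
        set f := wact a u with hf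
        set T := f ⁻¹' S with hT
        have hSsub : S ⊆ Set.range f := by
          rw [hu1]
          intro x hx hxe
          rw [Set.mem_singleton_iff] at hxe
          exact hes (hxe ▸ hx)
        have hfT : f '' T = S := by
          rw [Set.image_preimage_eq_inter_range]
          exact Set.inter_eq_self_of_subset_left hSsub
        have hsdup : s ∈ dupl a u := by rw [hu2]; rfl
        obtain ⟨q1, q2, hq, h1, h2⟩ := hsdup
        have hq1T : q1 ∈ T := by
          show f q1 ∈ S
          rw [show f q1 = s from h1]; exact hsS
        have hq2T : q2 ∈ T := by
          show f q2 ∈ S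
          rw [show f q2 = s from h2]; exact hsS
        have himg2 : f '' (T \ {q1}) = S := by
          apply Set.Subset.antisymm
          · rintro z ⟨x, ⟨hxT, -⟩, rfl⟩
            exact hxT
          · intro z hz
            rw [← hfT] at hz
            obtain ⟨x, hxT, rfl⟩ := hz
            by_cases hx1 : x = q1
            · refine ⟨q2, ⟨hq2T, fun h => hq (Set.mem_singleton_iff.mp h).symm⟩, ?_⟩
              rw [show f q2 = s from h2, hx1, show f q1 = s from h1]
            · exact ⟨x, ⟨hxT, hx1⟩, rfl⟩
        have hcard : S.ncard + 1 ≤ T.ncard := by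
          have h1' : S.ncard ≤ (T \ {q1}).ncard := by
            rw [← himg2]
            exact Set.ncard_image_le (Set.toFinite _)
          have h2' : (T \ {q1}).ncard = T.ncard - 1 := Set.ncard_diff_singleton_of_mem hq1T
          have h3' : 1 ≤ T.ncard := (Set.ncard_pos (Set.toFinite _)).mpr ⟨q1, hq1T⟩
          omega
        have hSn := Set.ncard_add_ncard_compl S
        have hTn := Set.ncard_add_ncard_compl T
        have hlt : Tᶜ.ncard < k := by
          rw [← hk]; omega
        obtain ⟨v, hv⟩ := ih (Tᶜ.ncard) hlt T ⟨q1, hq1T⟩ rfl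
        refine ⟨v ++ u, ?_⟩
        have hcomp : wact a (v ++ u) = f ∘ wact a v := by
          funext x; rw [wact_append]; rfl
        rw [hcomp, Set.range_comp, hv, hfT]
  intro S hS
  exact hmain (Sᶜ.ncard) S hS rfl

end Suff

theorem two_primes_criterion {n p q : ℕ} (hp : p.Prime) (hq : q.Prime) (hpq : n = p * q)
    (a : ZMod n → ZMod n) (hstd : Standardized a) :
    CompletelyReachable a ↔ AddSubgroup.closure (D1 a) = ⊤ := by
  haveI : NeZero n := ⟨by rw [hpq]; exact Nat.mul_ne_zero hp.ne_zero hq.ne_zero⟩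
  obtain ⟨hra, r, hr, har⟩ := hstd
  constructor
  · intro hCR
    by_contra hne
    set H := AddSubgroup.closure (D1 a) with hH
    have hd0 : a 0 ∈ D1 a := D1_a0 hra hr har
    have hd0ne : a 0 ≠ 0 := by
      intro h
      have : a 0 ∈ Set.range a := ⟨0, rfl⟩
      rw [hra] at this; exact this h
    have hD1H : D1 a ⊆ (H : Set (ZMod n)) := AddSubgroup.subset_closure
    have hrH : r ∈ H := by
      rcases r_mem_A hra hr har with h | h
      · exact absurd h hr
      · exact hD1H h
    -- cardinality facts
    have hcard_dvd : Nat.card H ∣ p * q := by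
      have h1 := AddSubgroup.card_dvd_of_le (le_top : H ≤ ⊤)
      have h2 : Nat.card (⊤ : AddSubgroup (ZMod n)) = n := by
        exact (Nat.card_congr AddSubgroup.topEquiv.toEquiv).trans (Nat.card_zmod n)
      rw [h2] at h1
      rw [← hpq]
      exact h1
    have hne1 : Nat.card H ≠ 1 := by
      intro h
      have hbot : H = ⊥ := AddSubgroup.card_eq_one.mp h
      have h0 : a 0 ∈ H := hD1H hd0
      rw [hbot] at h0
      exact hd0ne (AddSubgroup.mem_bot.mp h0)
    have hnepq : Nat.card H ≠ p * q := by
      intro h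
      apply hne
      apply AddSubgroup.eq_top_of_card_eq
      rw [h, ← hpq, Nat.card_zmod]
    have hprime : (Nat.card H).Prime := by
      obtain ⟨y, z, hy, hz, hyz⟩ := Nat.dvd_mul.mp hcard_dvd
      rcases (Nat.Prime.eq_one_or_self_of_dvd hp y hy) with rfl | rfl
      · rcases (Nat.Prime.eq_one_or_self_of_dvd hq z hz) with rfl | rfl
        · omega
        · rw [← hyz, one_mul]; exact hq
      · rcases (Nat.Prime.eq_one_or_self_of_dvd hq z hz) with rfl | rfl
        · rw [← hyz, mul_one]; exact hp
        · exfalso; exact hnepq hyz.symm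
    -- closure {r} = H
    have hzr_le : AddSubgroup.closure {r} ≤ H :=
      (AddSubgroup.closure_le H).mpr (Set.singleton_subset_iff.mpr hrH)
    have hzr_ne1 : Nat.card (AddSubgroup.closure ({r} : Set (ZMod n))) ≠ 1 := by
      intro h
      have hbot : AddSubgroup.closure ({r} : Set (ZMod n)) = ⊥ := AddSubgroup.card_eq_one.mp h
      have : r ∈ AddSubgroup.closure ({r} : Set (ZMod n)) :=
        AddSubgroup.subset_closure rfl
      rw [hbot] at this
      exact hr (AddSubgroup.mem_bot.mp this)
    have hzr_card : Nat.card (AddSubgroup.closure ({r} : Set (ZMod n))) = Nat.card H :=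
      ((hprime.eq_one_or_self_of_dvd _ (AddSubgroup.card_dvd_of_le hzr_le)).resolve_left hzr_ne1)
    have hzr_eq : AddSubgroup.closure ({r} : Set (ZMod n)) = H := by
      apply SetLike.ext'
      apply Set.eq_of_subset_of_ncard_le
      · exact hzr_le
      · rw [← Nat.card_coe_set_eq, ← Nat.card_coe_set_eq]
        have h1 : Nat.card (AddSubgroup.closure ({r} : Set (ZMod n)) : Set (ZMod n)) =
            Nat.card (AddSubgroup.closure ({r} : Set (ZMod n))) := rfl
        have h2 : Nat.card (H : Set (ZMod n)) = Nat.card H := rfl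
        rw [h1, h2, hzr_card]
      · exact Set.toFinite _
    -- H ⊆ A
    have hsmul : ∀ (k : ℕ), (k • r) ∈ insert (0:ZMod n) (D1 a) := by
      intro k
      induction k with
      | zero => simpa using Set.mem_insert _ _
      | succ m ihm =>
          rw [succ_nsmul]
          exact A_add_r hra hr har _ ihm
    have hHsubA : (H : Set (ZMod n)) ⊆ insert (0:ZMod n) (D1 a) := by
      intro x hx
      rw [← hzr_eq] at hx
      obtain ⟨k, hk⟩ := AddSubgroup.mem_closure_singleton.mp hx
      have hn0 : (0:ℤ) < (n : ℤ) := by exact_mod_cast Nat.pos_of_ne_zero (NeZero.ne n)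
      set m := (k % (n : ℤ)).toNat with hm
      have hmk : (m : ℤ) = k % (n : ℤ) := Int.toNat_of_nonneg (Int.emod_nonneg k (ne_of_gt hn0))
      have hnr : (n : ℤ) • r = 0 := by
        rw [natCast_zsmul, nsmul_eq_mul, ZMod.natCast_self, zero_mul]
      have hksmul : (m : ℤ) • r = k • r := by
        have hdiv : (n : ℤ) * (k / (n : ℤ)) + k % (n : ℤ) = k := Int.mul_ediv_add_emod k (n : ℤ)
        calc (m : ℤ) • r = (k % (n : ℤ)) • r := by rw [hmk]
          _ = ((n : ℤ) * (k / (n : ℤ))) • r + (k % (n : ℤ)) • r - ((n : ℤ) * (k / (n : ℤ))) • r := by ring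
          _ = k • r - ((n : ℤ) * (k / (n : ℤ))) • r := by rw [← add_zsmul, hdiv]
          _ = k • r - (k / (n : ℤ)) • ((n:ℤ) • r) := by rw [mul_comm, mul_zsmul]
          _ = k • r := by rw [hnr, smul_zero, sub_zero]
      have : x = m • r := by
        rw [← hk, ← hksmul, natCast_zsmul]
      rw [this]
      exact hsmul m
    have haH : ∀ x ∈ H, a x ∈ H := by
      intro x hx
      rcases hHsubA hx with h | h
      · rw [h]
        exact hD1H hd0
      · exact hD1H (D1_a hra hr har x h)
    obtain ⟨t, ht⟩ : ∃ t, t ∉ H := by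
      by_contra hall
      push_neg at hall
      exact hne (AddSubgroup.eq_top_iff' H |>.mpr hall)
    have hSne : ({x : ZMod n | x - 0 ∈ H}ᶜ : Set (ZMod n)).Nonempty := by
      refine ⟨t, ?_⟩
      simp only [Set.mem_compl_iff, Set.mem_setOf_eq, sub_zero]
      exact ht
    obtain ⟨w, hw⟩ := hCR _ hSne
    exact unreach hra hr har H hrH haH w 0 hw
  · intro hcl
    exact sufficiency hcl
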